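/- For every integer d ≥ 2, the polynomials C_d(m) = Σ_{k=0}^{d} C(2d, 2k)·C(m+d−k, d) satisfy the recurrence d·C_d(m) = 2(2m+1)·C_{d−1}(m) + (d−2)·C_{d−2}(m). -/

import Mathlib

/-!
Substituting `t = X²` in the Ehrhart series `∑ₘ C_d(m) tᵐ = (∑ₖ C(2d,2k) tᵏ) / (1 - t)^(d+1)`
turns it into the even part of `F_d = (1 + X)^(2d) / (1 - X²)^(d+1)`, so that `C_d(m)` is the
coefficient of `X^(2m)` in `F_d`. These series satisfy the differential identity
`d F_d = 2 (X F_{d-1})' + (d - 2) F_{d-2}`, and taking the coefficient of `X^(2m)`, where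
`(X F)'` contributes the factor `2m + 1`, gives the recurrence.
-/

open PowerSeries Finset

namespace PowerSeries

variable {R : Type*} [CommRing R]

noncomputable def evenPart (f : R⟦X⟧) : R⟦X⟧ := mk fun k => coeff (2 * k) f

noncomputable def oddPart (f : R⟦X⟧) : R⟦X⟧ := mk fun k => coeff (2 * k + 1) f

theorem expand_evenPart_add_X_mul_expand_oddPart (f : R⟦X⟧) :
    expand 2 two_ne_zero (evenPart f) + X * expand 2 two_ne_zero (oddPart f) = f := by
  ext (_ | n)
  · simp [evenPart]
  · rw [map_add, coeff_succ_X_mul, coeff_expand, coeff_expand, evenPart, oddPart]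
    obtain ⟨k, rfl | rfl⟩ := Nat.even_or_odd' n
    · rw [if_neg (by omega), if_pos (by omega), coeff_mk, zero_add,
        Nat.mul_div_cancel_left _ two_pos]
    · rw [if_pos (by omega), if_neg (by omega), coeff_mk, add_zero,
        show 2 * k + 1 + 1 = 2 * (k + 1) by ring, Nat.mul_div_cancel_left _ two_pos]

theorem coeff_two_mul_mul_expand (f g : R⟦X⟧) (m : ℕ) :
    coeff (2 * m) (f * expand 2 two_ne_zero g) = coeff m (evenPart f * g) := by
  conv_lhs => rw [← expand_evenPart_add_X_mul_expand_oddPart f]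
  rw [add_mul, mul_assoc, ← map_mul, ← map_mul, map_add, coeff_expand_mul]
  rcases m with _ | m
  · simp
  · rw [show 2 * (m + 1) = 2 * m + 1 + 1 by ring, coeff_succ_X_mul,
      coeff_expand_of_not_dvd _ _ _ (by omega), add_zero]

theorem coeff_derivative_X_mul (f : R⟦X⟧) (n : ℕ) :
    coeff n (d⁄dX R (X * f)) = (n + 1) * coeff n f := by
  rw [coeff_derivative, coeff_succ_X_mul, mul_comm]

theorem coeff_one_add_X_pow (n k : ℕ) : coeff k ((1 + X : R⟦X⟧) ^ n) = n.choose k := by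
  have : (1 + X : R⟦X⟧) ^ n = ((1 + Polynomial.X) ^ n : Polynomial R) := by simp
  rw [this, Polynomial.coeff_coe, Polynomial.coeff_one_add_X_pow]

theorem expand_invOneSubPow_mul_one_sub_X_sq_pow (k : ℕ) :
    expand 2 two_ne_zero (invOneSubPow R k).val * (1 - X ^ 2) ^ k = 1 := by
  have h := congrArg (expand 2 two_ne_zero) (invOneSubPow R k).val_inv
  rwa [invOneSubPow_inv_eq_one_sub_pow, map_mul, map_pow, map_sub, map_one, expand_X] at h

theorem one_sub_X_sq_mul_expand_invOneSubPow_succ (k : ℕ) :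
    (1 - X ^ 2) * expand 2 two_ne_zero (invOneSubPow R (k + 1)).val =
      expand 2 two_ne_zero (invOneSubPow R k).val := by
  have h := congrArg (expand 2 two_ne_zero)
    (one_sub_pow_mul_invOneSubPow_val_add_eq_invOneSubPow_val R k 1)
  rwa [map_mul, map_pow, map_sub, map_one, expand_X, pow_one] at h

theorem derivative_expand_invOneSubPow (k : ℕ) :
    d⁄dX R (expand 2 two_ne_zero (invOneSubPow R k).val) =
      2 * (k : R⟦X⟧) * X * expand 2 two_ne_zero (invOneSubPow R (k + 1)).val := by
  rcases k with _ | j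
  · simp [invOneSubPow_zero]
  set W := expand 2 two_ne_zero (invOneSubPow R (j + 1)).val
  set W' := expand 2 two_ne_zero (invOneSubPow R (j + 2)).val
  have h1 := expand_invOneSubPow_mul_one_sub_X_sq_pow (R := R) (j + 1)
  have h2 := one_sub_X_sq_mul_expand_invOneSubPow_succ (R := R) (j + 1)
  have hD := congrArg (d⁄dX R) h1
  rw [Derivation.leibniz, derivative_pow, derivative_one, map_sub, derivative_one,
    derivative_pow, derivative_X, smul_eq_mul, smul_eq_mul, Nat.add_sub_cancel] at hD
  push_cast at hD ⊢
  linear_combination (-(d⁄dX R) W) * h1 + W * hD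
    + 2 * (j + 1 : R⟦X⟧) * X * (-(W * (1 - X ^ 2) ^ j) * h2 + W' * h1)

end PowerSeries

namespace TypeCRootPolytope

/-- `(1 + X)^(2d) / (1 - X²)^(d+1)`. -/
noncomputable def series (R : Type*) [CommRing R] (d : ℕ) : R⟦X⟧ :=
  (1 + X) ^ (2 * d) * expand 2 two_ne_zero (invOneSubPow R (d + 1)).val

variable {R : Type*} [CommRing R]

theorem series_recurrence (e : ℕ) :
    (e + 2) • series R (e + 2) = 2 • d⁄dX R (X * series R (e + 1)) + e • series R e := by
  have hW₂ := one_sub_X_sq_mul_expand_invOneSubPow_succ (R := R) (e + 2)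
  have hW₁ := one_sub_X_sq_mul_expand_invOneSubPow_succ (R := R) (e + 1)
  have hD := derivative_expand_invOneSubPow (R := R) (e + 2)
  simp only [series]
  rw [Derivation.leibniz, Derivation.leibniz, derivative_pow, hD, map_add, derivative_one,
    derivative_X, show 2 * (e + 1) - 1 = 2 * e + 1 by omega]
  simp only [smul_eq_mul, nsmul_eq_mul]
  push_cast
  -- for `W_k = (1 - X²)^(-k)`, rewriting `W_k = (1 - X²) W_(k+1)` makes both sides
  -- `(1 + X)^(2e) W_(e+3)` times the same polynomial
  linear_combination (2 * (1 + X) ^ (2 * (e + 1)) + 2 * X * (2 * e + 2) * (1 + X) ^ (2 * e + 1)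
    + e * (1 + X) ^ (2 * e) * (1 - X ^ 2)) * hW₂ + e * (1 + X) ^ (2 * e) * hW₁

theorem coeff_two_mul_series (d m : ℕ) :
    coeff (2 * m) (series R d) =
      ((∑ k ∈ range (d + 1), (2 * d).choose (2 * k) * (m + d - k).choose d : ℕ) : R) := by
  rw [series, coeff_two_mul_mul_expand, coeff_mul, invOneSubPow_val_succ_eq_mk_add_choose]
  simp only [evenPart, coeff_mk, coeff_one_add_X_pow]
  rw [Finset.Nat.sum_antidiagonal_eq_sum_range_succ
    (fun i j => ((2 * d).choose (2 * i) : R) * (d + j).choose d), Nat.succ_eq_add_one]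
  calc ∑ k ∈ range (m + 1), ((2 * d).choose (2 * k) : R) * (d + (m - k)).choose d
      = ∑ k ∈ range (m + 1), ((2 * d).choose (2 * k) : R) * (m + d - k).choose d :=
        sum_congr rfl fun k hk => by rw [show d + (m - k) = m + d - k by simp at hk; omega]
    _ = ∑ k ∈ range (m + d + 1), ((2 * d).choose (2 * k) : R) * (m + d - k).choose d := by
        refine sum_subset (range_subset_range.mpr (by omega)) fun k hk hk' => ?_
        rw [Nat.choose_eq_zero_of_lt (n := m + d - k) (by simp at hk hk'; omega), Nat.cast_zero,
          mul_zero]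
    _ = ∑ k ∈ range (d + 1), ((2 * d).choose (2 * k) : R) * (m + d - k).choose d := by
        refine (sum_subset (range_subset_range.mpr (by omega)) fun k _ hk => ?_).symm
        rw [Nat.choose_eq_zero_of_lt (n := 2 * d) (by simp at hk; omega), Nat.cast_zero, zero_mul]
    _ = _ := by push_cast; rfl

end TypeCRootPolytope

theorem typeC_root_polytope_recurrence (d m : ℕ) (hd : 2 ≤ d) :
    d * (∑ k ∈ Finset.range (d + 1), (2 * d).choose (2 * k) * (m + d - k).choose d)
      = 2 * (2 * m + 1)
          * (∑ k ∈ Finset.range d, (2 * (d - 1)).choose (2 * k) * (m + (d - 1) - k).choose (d - 1))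
        + (d - 2)
          * (∑ k ∈ Finset.range (d - 1), (2 * (d - 2)).choose (2 * k) * (m + (d - 2) - k).choose (d - 2)) := by
  obtain ⟨e, rfl⟩ : ∃ e, d = e + 2 := ⟨d - 2, by omega⟩
  have h := congrArg (coeff (2 * m)) (TypeCRootPolytope.series_recurrence (R := ℤ) e)
  simp only [map_add, map_nsmul, coeff_derivative_X_mul, TypeCRootPolytope.coeff_two_mul_series]
    at h
  simp only [nsmul_eq_mul, ← mul_assoc] at h
  simp only [Nat.add_sub_cancel, show e + 2 - 1 = e + 1 by omega]
  exact_mod_cast h
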